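/- Fix a real α > −1 and integers n, k with 1 ≤ k ≤ n. Then for every real β > −1 and all reals x > 0 and y, the function β ↦ P^{(α,β)}_{n,k}(x,y) (Laguerre–Laguerre Koornwinder polynomial) is differentiable at β with derivative ∑_{s=0}^{k−1} (1/(s+1)) · x^{s+1} · P^{(α+2s+2,β)}_{n−s−1,k−s−1}(x,y). -/

import Mathlib

open Finset MeasureTheory Real

/-- Pochhammer symbol `(a)_m = a (a+1) ⋯ (a+m-1)`. -/
noncomputable def poch (a : ℝ) (m : ℕ) : ℝ := ∏ i ∈ Finset.range m, (a + i)

/-- Jacobi polynomial `P_n^{(α,β)}(x)`. -/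
noncomputable def jacobiP (α β : ℝ) (n : ℕ) (x : ℝ) : ℝ :=
  ∑ i ∈ Finset.range (n + 1),
    poch (α + i + 1) (n - i) * poch (n + α + β + 1) i /
      ((Nat.factorial (n - i) : ℝ) * (Nat.factorial i : ℝ)) * ((x - 1) / 2) ^ i

/-- Generalized Laguerre polynomial `L_n^{(α)}(x)`. -/
noncomputable def laguerreL (α : ℝ) (n : ℕ) (x : ℝ) : ℝ :=
  ∑ i ∈ Finset.range (n + 1),
    poch (α + i + 1) (n - i) / ((Nat.factorial (n - i) : ℝ) * (Nat.factorial i : ℝ)) * (-x) ^ i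

/-- Laguerre–Laguerre Koornwinder polynomial
`P^{(α,β)}_{n,k}(x,y) = L^{(α+2k+1)}_{n-k}(x) · x^k · L^{(β)}_k(y/x)`. -/
noncomputable def llP (α β : ℝ) (n k : ℕ) (x y : ℝ) : ℝ :=
  laguerreL (α + 2 * k + 1) (n - k) x * x ^ k * laguerreL β k (y / x)

/-!
Only the factor `L_k^{(β)}(y/x)` of `P^{(α,β)}_{n,k}` depends on `β`. Its coefficients are
`(β+i+1)_{k-i}/(k-i)!`, and `∂_a ((a)_m/m!) = ∑_{t<m} (a)_t/(t! (m-t))`, the coefficient form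
of `∂_a (1-z)^{-a} = -log(1-z) (1-z)^{-a}`. Summing along diagonals gives
`∂_β L_k^{(β)} = ∑_{j<k} L_j^{(β)}/(k-j)`, and each term `L_{k-s-1}^{(β)}(y/x)`, multiplied
by the β-independent factor `L^{(α+2k+1)}_{n-k}(x) x^k`, is
`x^{s+1} P^{(α+2s+2,β)}_{n-s-1,k-s-1}(x,y)`.
-/

open scoped Nat

lemma poch_succ (a : ℝ) (m : ℕ) : poch a (m + 1) = poch a m * (a + m) :=
  prod_range_succ _ _

lemma succ_mul_poch_succ_div_factorial (a : ℝ) (t : ℕ) :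
    (t + 1 : ℝ) * (poch a (t + 1) / (t + 1)!) = (a + t) * (poch a t / t !) := by
  rw [poch_succ, Nat.factorial_succ]
  push_cast
  field_simp

lemma succ_mul_sum_poch_div_factorial (a : ℝ) (m : ℕ) :
    (m + 1) * ∑ t ∈ range (m + 1), poch a t / t ! / (m + 1 - t : ℕ)
      = (a + m) * ∑ t ∈ range m, poch a t / t ! / (m - t : ℕ) + poch a m / m ! := by
  set c : ℕ → ℝ := fun t => poch a t / (t !)
  -- split `m + 1 = t + (m + 1 - t)` on the left and `a + m = (a + t) + (m - t)` on the right
  have hleft : (m + 1) * ∑ t ∈ range (m + 1), c t / (m + 1 - t : ℕ)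
      = ∑ t ∈ range (m + 1), t * c t / (m + 1 - t : ℕ) + ∑ t ∈ range (m + 1), c t := by
    rw [mul_sum, ← sum_add_distrib]
    refine sum_congr rfl fun t ht => ?_
    have ht : t < m + 1 := mem_range.mp ht
    rw [Nat.cast_sub ht.le]
    push_cast
    have : (m + 1 - t : ℝ) ≠ 0 := by
      have : (t : ℝ) < m + 1 := by exact_mod_cast ht
      linarith
    field_simp
    ring
  have hc : ∀ t : ℕ, ((t + 1 : ℕ) : ℝ) * c (t + 1) = (a + t) * c t := by
    intro t
    push_cast
    exact succ_mul_poch_succ_div_factorial a t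
  have hright : (a + m) * ∑ t ∈ range m, c t / (m - t : ℕ)
      = ∑ t ∈ range m, (t + 1 : ℕ) * c (t + 1) / (m - t : ℕ) + ∑ t ∈ range m, c t := by
    rw [mul_sum, ← sum_add_distrib]
    refine sum_congr rfl fun t ht => ?_
    have ht : t < m := mem_range.mp ht
    rw [hc, Nat.cast_sub ht.le]
    have : (m - t : ℝ) ≠ 0 := by
      have : (t : ℝ) < m := by exact_mod_cast ht
      linarith
    field_simp
    ring
  rw [hleft, hright, sum_range_succ' (fun t => t * c t / _), sum_range_succ c]
  simp only [Nat.add_sub_add_right, Nat.cast_zero, zero_mul, zero_div, add_zero]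
  ring

theorem hasDerivAt_poch_div_factorial (m : ℕ) (a : ℝ) :
    HasDerivAt (fun b => poch b m / m !) (∑ t ∈ range m, poch a t / t ! / (m - t : ℕ)) a := by
  induction m with
  | zero => simpa [poch] using hasDerivAt_const a (1 : ℝ)
  | succ m ih =>
    have hfun : (fun b => poch b (m + 1) / (m + 1)!)
        = fun b => poch b m / m ! * ((b + m) / (m + 1)) := by
      funext b
      rw [poch_succ, Nat.factorial_succ]
      push_cast
      field_simp
    rw [hfun]
    refine (ih.fun_mul ((hasDerivAt_id' a).add_const (m : ℝ) |>.div_const (m + 1))).congr_deriv ?_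
    have key := succ_mul_sum_poch_div_factorial a m
    set S := ∑ t ∈ range m, poch a t / t ! / (m - t : ℕ)
    set S' := ∑ t ∈ range (m + 1), poch a t / t ! / (m + 1 - t : ℕ)
    have hS' : S' = ((a + m) * S + poch a m / m !) / (m + 1) := by
      rw [← key]
      field_simp
    rw [hS']
    ring

theorem hasDerivAt_laguerreL_param (n : ℕ) (x α : ℝ) :
    HasDerivAt (fun a => laguerreL a n x)
      (∑ j ∈ range n, laguerreL α j x / (n - j : ℕ)) α := by
  have hterm : ∀ i ∈ range (n + 1), HasDerivAt
      (fun a => poch (a + (i + 1)) (n - i) / (n - i)! / i ! * (-x) ^ i)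
      ((∑ t ∈ range (n - i), poch (α + (i + 1)) t / t ! / (n - i - t : ℕ)) / i ! * (-x) ^ i)
      α :=
    fun i _ => (hasDerivAt_poch_div_factorial (n - i) _).comp_add_const α (i + 1)
      |>.div_const _ |>.mul_const _
  have hL : (fun a => laguerreL a n x)
      = fun a => ∑ i ∈ range (n + 1),
          poch (a + (i + 1)) (n - i) / (n - i)! / i ! * (-x) ^ i := by
    funext a
    simp only [laguerreL, div_div, add_assoc]
  rw [hL]
  refine (HasDerivAt.fun_sum hterm).congr_deriv ?_
  calc _ = ∑ i ∈ range n, ∑ t ∈ range (n - i),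
          poch (α + (i + 1)) t / t ! / i ! * (-x) ^ i / (n - (i + t) : ℕ) := by
        rw [sum_range_succ, Nat.sub_self, sum_range_zero, zero_div, zero_mul, add_zero]
        refine sum_congr rfl fun i _ => ?_
        rw [sum_div, sum_mul]
        refine sum_congr rfl fun t _ => ?_
        rw [Nat.sub_sub]
        ring
    _ = ∑ j ∈ range n, ∑ i ∈ range (j + 1),
          poch (α + (i + 1)) (j - i) / (j - i)! / i ! * (-x) ^ i / (n - j : ℕ) := by
        rw [← sum_range_diag_flip n
          (fun i t => poch (α + (i + 1)) t / t ! / i ! * (-x) ^ i / (n - (i + t) : ℕ))]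
        refine sum_congr rfl fun j _ => sum_congr rfl fun i hi => ?_
        rw [Nat.add_sub_cancel' (Nat.lt_succ_iff.mp (mem_range.mp hi))]
    _ = _ := by
        refine sum_congr rfl fun j _ => ?_
        rw [laguerreL, sum_div]
        refine sum_congr rfl fun i _ => ?_
        rw [div_div, add_assoc]

lemma pow_mul_llP_of_add_eq (α β x y : ℝ) (n : ℕ) {j s k : ℕ} (h : j + s + 1 = k) :
    x ^ (s + 1) * llP (α + 2 * s + 2) β (n - s - 1) j x y
      = laguerreL (α + 2 * k + 1) (n - k) x * x ^ k * laguerreL β j (y / x) := by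
  have hparam : α + 2 * s + 2 + 2 * j + 1 = α + 2 * k + 1 := by
    rw [← h]
    push_cast
    ring
  rw [llP, hparam, show n - s - 1 - j = n - k by omega, ← h]
  ring

theorem llP_hasDerivAt_param_beta_general
    (α : ℝ) (n k : ℕ)
    (β : ℝ) (x : ℝ) (y : ℝ) :
    HasDerivAt (fun b : ℝ => llP α b n k x y)
      (∑ s ∈ Finset.range k,
          (1 / ((s : ℝ) + 1)) * x ^ (s + 1) * llP (α + 2 * s + 2) β (n - s - 1) (k - s - 1) x y)
      β := by
  refine ((hasDerivAt_laguerreL_param k (y / x) β).const_mul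
    (laguerreL (α + 2 * k + 1) (n - k) x * x ^ k)).congr_deriv ?_
  rw [mul_sum, ← sum_range_reflect]
  refine sum_congr rfl fun s hs => ?_
  have hs : s < k := mem_range.mp hs
  rw [mul_assoc (1 / _), pow_mul_llP_of_add_eq α β x y n (show k - s - 1 + s + 1 = k by omega),
    show k - 1 - s = k - s - 1 by omega, show k - (k - s - 1) = s + 1 by omega]
  push_cast
  ring

/-- Parameter derivative with respect to `β` of the Laguerre–Laguerre Koornwinder polynomials. -/
theorem llP_hasDerivAt_param_beta
    (α : ℝ) (hα : α > -1) (n k : ℕ) (hk : 1 ≤ k) (hkn : k ≤ n)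
    (β : ℝ) (hβ : β > -1) (x : ℝ) (hx : 0 < x) (y : ℝ) :
    HasDerivAt (fun b : ℝ => llP α b n k x y)
      (∑ s ∈ Finset.range k,
          (1 / ((s : ℝ) + 1)) * x ^ (s + 1) * llP (α + 2 * s + 2) β (n - s - 1) (k - s - 1) x y)
      β :=
  llP_hasDerivAt_param_beta_general α n k β x y
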